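/- arXiv:2405.18958 — 3 statements merged into one kernel-verified Lean document; each statement's English description precedes it below -/
import Mathlib

section
/- Let PC be a protocol challenge with compliance hypothesis, with a distinguished Infrastructure agent 𝕀 satisfying Wrong_𝕀 = ∅ and having a compliant behavior β_𝕀 (i.e., (β_𝕀, β̄_{-𝕀}) ∈ Com for all β̄_{-𝕀}). Define the game G with payoffs: for a ≠ 𝕀, μ_a(σ̄) = 0 if σ̄ ∈ Wrong_a ∩ Com and 1 otherwise; μ_𝕀(σ̄) = 1 if σ̄ ∈ Com and 0 otherwise. Then a protocol P is safe under the compliance hypothesis if and only if every σ̄ ∈ P is a strong secure equilibrium in G with μ_i(σ̄) = 1 for every player i. -/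
namespace Stmt2

noncomputable section
open Classical

def IsAttack {A : Type*} {B : A → Type*} (Wrong : A → Set (∀ a, B a))
    (P : Set (∀ a, B a)) (C : Set A) (α : ∀ a, B a) : Prop :=
  (∃ β ∈ P, ∀ a ∉ C, α a = β a) ∧
  (∀ a ∈ C, α ∉ Wrong a) ∧
  (∃ a, a ∉ C ∧ α ∈ Wrong a)

/-- Safety under the compliance hypothesis: no attack that additionally lies in `Com`,
and in every implementation the Infrastructure's behavior is compliant, i.e. together
with any behaviors of the other agents the profile lies in `Com`. -/
def SafeCom {A : Type*} {B : A → Type*} [DecidableEq A]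
    (Wrong : A → Set (∀ a, B a)) (Com : Set (∀ a, B a)) (I : A)
    (P : Set (∀ a, B a)) : Prop :=
  (¬ ∃ (C : Set A) (α : ∀ a, B a), IsAttack Wrong P C α ∧ α ∈ Com) ∧
  (∀ β ∈ P, ∀ γ : ∀ a, B a, Function.update γ I (β I) ∈ Com)

def combine {A : Type*} {B : A → Type*} (C : Set A) (σ σ' : ∀ a, B a) : ∀ a, B a :=
  fun a => if a ∈ C then σ' a else σ a

def HarmfulDev {A : Type*} {B : A → Type*} (μ : A → (∀ a, B a) → ℝ)
    (σ : ∀ a, B a) (C : Set A) (σ' : ∀ a, B a) : Prop :=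
  (∀ i ∈ C, μ i σ ≤ μ i (combine C σ σ')) ∧
  (∃ j, j ∉ C ∧ μ j (combine C σ σ') < μ j σ)

def IsSSE {A : Type*} {B : A → Type*} (μ : A → (∀ a, B a) → ℝ) (σ : ∀ a, B a) : Prop :=
  ¬ ∃ (C : Set A) (σ' : ∀ a, B a), HarmfulDev μ σ C σ'

/-- Safe protocols under compliance hypothesis correspond exactly to sets of SSEs in
which every player gets payoff 1. -/
theorem stmt2 (A : Type*) [DecidableEq A] (B : A → Type*) (hB : ∀ a, Nonempty (B a))
    (Wrong : A → Set (∀ a, B a)) (Corr Com : Set (∀ a, B a))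
    (hCorr : ∀ a, Corr ∩ Wrong a = ∅)
    (I : A) (hI : Wrong I = ∅)
    (βI : B I) (hβI : ∀ β : ∀ a, B a, Function.update β I βI ∈ Com)
    (P : Set (∀ a, B a)) (hP : P.Nonempty)
    (μ : A → (∀ a, B a) → ℝ)
    (hμ : ∀ a, a ≠ I → ∀ σ, μ a σ = if σ ∈ Wrong a ∩ Com then 0 else 1)
    (hμI : ∀ σ, μ I σ = if σ ∈ Com then 1 else 0) :
    SafeCom Wrong Com I P ↔ ∀ σ ∈ P, IsSSE μ σ ∧ ∀ i, μ i σ = 1 := by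
  constructor
  · rintro ⟨hNoAtk, hCom⟩ σ hσ
    have hσCom : σ ∈ Com := by
      have h := hCom σ hσ σ
      simpa using h
    have hpay : ∀ i, μ i σ = 1 := by
      intro i
      by_cases hiI : i = I
      · subst hiI; rw [hμI]; simp [hσCom]
      · rw [hμ i hiI]
        split_ifs with h
        · exact absurd (⟨∅, σ, ⟨⟨σ, hσ, fun a _ => rfl⟩,
            fun a ha => absurd ha (Set.notMem_empty a),
            ⟨i, Set.notMem_empty i, h.1⟩⟩, h.2⟩ :
            ∃ C α, IsAttack Wrong P C α ∧ α ∈ Com) hNoAtk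
        · rfl
    refine ⟨?_, hpay⟩
    rintro ⟨C, σ', hall, j, hjC, hjlt⟩
    set τ := combine C σ σ' with hτ
    have hτpayC : ∀ i ∈ C, μ i τ = 1 := by
      intro i hi
      have h1 := hall i hi
      rw [hpay i] at h1
      by_cases hiI : i = I
      · subst hiI; rw [hμI] at h1 ⊢
        split_ifs at h1 ⊢ with h
        · rfl
        · linarith
      · rw [hμ i hiI] at h1 ⊢
        split_ifs at h1 ⊢ with h
        · linarith
        · rfl
    rw [hpay j] at hjlt
    by_cases hjI : j = I
    · subst hjI
      have hτI : τ j = σ j := by simp [hτ, combine, hjC]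
      have hτCom : τ ∈ Com := by
        have h2 := hCom σ hσ τ
        rw [← hτI, Function.update_eq_self] at h2
        exact h2
      rw [hμI] at hjlt
      simp [hτCom] at hjlt
    · rw [hμ j hjI] at hjlt
      split_ifs at hjlt with h
      · apply hNoAtk
        refine ⟨C, τ, ⟨⟨σ, hσ, fun a ha => by simp [hτ, combine, ha]⟩, ?_,
          ⟨j, hjC, h.1⟩⟩, h.2⟩
        intro a ha
        have h3 := hτpayC a ha
        by_cases haI : a = I
        · subst haI; rw [hI]; exact Set.notMem_empty τ
        · rw [hμ a haI] at h3
          split_ifs at h3 with h2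
          · linarith
          · intro hw; exact h2 ⟨hw, h.2⟩
      · linarith
  · intro h
    constructor
    · rintro ⟨C, α, ⟨⟨β, hβ, hout⟩, hCnot, j, hjC, hjW⟩, hαCom⟩
      obtain ⟨hSSE, hpay⟩ := h β hβ
      have hcomb : combine C β α = α := by
        funext a
        by_cases ha : a ∈ C
        · simp [combine, ha]
        · simp [combine, ha, (hout a ha).symm]
      apply hSSE
      refine ⟨C, α, ?_, ?_⟩
      · intro i hi
        rw [hpay i, hcomb]
        by_cases hiI : i = I
        · subst hiI; rw [hμI]; simp [hαCom]
        · rw [hμ i hiI]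
          split_ifs with h2
          · exact absurd h2.1 (hCnot i hi)
          · exact le_refl 1
      · have hjI : j ≠ I := by
          intro he; subst he; rw [hI] at hjW; exact hjW
        refine ⟨j, hjC, ?_⟩
        rw [hpay j, hcomb, hμ j hjI]
        simp [hjW, hαCom]
    · intro β hβ γ
      obtain ⟨hSSE, hpay⟩ := h β hβ
      by_contra hnc
      set τ : ∀ a, B a := Function.update γ I (β I) with hτdef
      apply hSSE
      refine ⟨{a | a ≠ I}, γ, ?_, ?_⟩
      · have hcomb : combine {a | a ≠ I} β γ = τ := by
          funext a
          by_cases ha : a = I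
          · subst ha; simp [combine, τ]
          · simp [combine, ha, τ, Function.update_of_ne ha]
        intro i hi
        rw [hpay i, hcomb, hμ i hi]
        split_ifs with h2
        · exact absurd h2.2 hnc
        · exact le_refl 1
      · have hcomb : combine {a | a ≠ I} β γ = τ := by
          funext a
          by_cases ha : a = I
          · subst ha; simp [combine, τ]
          · simp [combine, ha, τ, Function.update_of_ne ha]
        refine ⟨I, by simp, ?_⟩
        rw [hpay I, hcomb, hμI]
        simp [hnc]

end
end Stmt2
end

section
/- In a parity game G_{‖v₀} with Mealy machine M, if a witness pair (α, β) exists in the product graph with n vertices, then there exists a witness pair of lasso-shaped paths (h c^ω, h' d^ω) where the total sizes of h, c and of h', d are polynomially bounded (h, h' have length at most 2n and c, d have length at most n²), the payoff of each player on the lassos equals their payoff on α, β respectively, and the set of players with deviating edges along h'd^ω is contained in the set with deviating edges along β. -/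
namespace Stmt5

noncomputable section
open Classical

structure Arena (ι V : Type*) where
  owner : V → ι
  E : V → V → Prop
  nosink : ∀ v, ∃ w, E v w

structure Mealy {ι V : Type*} (G : Arena ι V) where
  Q : Type*
  q0 : Q
  Δ : Q → V → Q → V → Prop
  edge : ∀ p u q v, Δ p u q v → G.E u v
  total : ∀ p u, ∃ q v, Δ p u q v

def ProdEdge {ι V : Type*} (G : Arena ι V) (M : Mealy G) (x y : V × M.Q) : Prop :=
  G.E x.1 y.1 ∧ ∃ w, M.Δ x.2 x.1 y.2 w

def IsDevEdge {ι V : Type*} (G : Arena ι V) (M : Mealy G) (x y : V × M.Q) : Prop :=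
  ProdEdge G M x y ∧ ¬ M.Δ x.2 x.1 y.2 y.1

def IsDevEdgeBy {ι V : Type*} (G : Arena ι V) (M : Mealy G) (i : ι)
    (x y : V × M.Q) : Prop :=
  IsDevEdge G M x y ∧ G.owner x.1 = i

def ProdPath {ι V : Type*} (G : Arena ι V) (v0 : V) (M : Mealy G)
    (α : ℕ → V × M.Q) : Prop :=
  α 0 = (v0, M.q0) ∧ ∀ n, ProdEdge G M (α n) (α (n + 1))

/-- `v` occurs infinitely often along `π`. -/
def InfOcc {X : Type*} (π : ℕ → X) (v : X) : Prop :=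
  ∀ N, ∃ n ≥ N, π n = v

/-- The parity condition: the minimal color occurring infinitely often is even. -/
def ParityAccept {X : Type*} (κ : X → ℕ) (π : ℕ → X) : Prop :=
  ∃ v, InfOcc π v ∧ Even (κ v) ∧ ∀ w, InfOcc π w → κ v ≤ κ w

/-- Boolean parity payoff of player `i` on a play. -/
def parityPayoff {V : Type*} (κ : V → ℕ) (π : ℕ → V) : ℝ :=
  if ParityAccept κ π then 1 else 0

def WitnessPair {ι V : Type*} (G : Arena ι V) (v0 : V) (M : Mealy G)
    (μ : ι → (ℕ → V) → ℝ) (α β : ℕ → V × M.Q) : Prop :=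
  ProdPath G v0 M α ∧ ProdPath G v0 M β ∧
  (∀ n, ¬ IsDevEdge G M (α n) (α (n + 1))) ∧
  (∀ k, ((∀ m < k, α m = β m) ∧ α k ≠ β k) →
      k ≠ 0 ∧ IsDevEdge G M (β (k - 1)) (β k)) ∧
  (∃ i, μ i (fun n => (β n).1) < μ i (fun n => (α n).1)) ∧
  (∀ j, (∃ n, IsDevEdgeBy G M j (β n) (β (n + 1))) →
      μ j (fun n => (α n).1) ≤ μ j (fun n => (β n).1))

/-- A sequence is a lasso of prefix length at most `m` and cycle length at most `p`. -/
def IsLasso {X : Type*} (m p : ℕ) (γ : ℕ → X) : Prop :=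
  1 ≤ p ∧ ∀ k, m ≤ k → γ (k + p) = γ k

section Aux
variable {X : Type*}

def Steps (R : X → X → Prop) (f : ℕ → X) (n : ℕ) : Prop := ∀ i, i < n → R (f i) (f (i+1))

lemma steps_mono {R R' : X → X → Prop} (h : ∀ a b, R a b → R' a b) {f : ℕ → X} {n : ℕ}
    (hf : Steps R f n) : Steps R' f n := fun i hi => h _ _ (hf i hi)

lemma steps_shorten [Fintype X] {R : X → X → Prop} :
    ∀ (n : ℕ) (f : ℕ → X), Steps R f n →
    ∃ n' f', n' + 1 ≤ Fintype.card X ∧ f' 0 = f 0 ∧ f' n' = f n ∧ Steps R f' n' := by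
  intro n
  induction n using Nat.strong_induction_on with
  | _ n ih =>
    intro f hf
    by_cases hn : n + 1 ≤ Fintype.card X
    · exact ⟨n, f, hn, rfl, rfl, hf⟩
    · obtain ⟨a, b, hab, heq⟩ :=
        Fintype.exists_ne_map_eq_of_card_lt (fun i : Fin (n+1) => f i) (by simp; omega)
      obtain ⟨i, j, hij, hfij⟩ : ∃ i j : ℕ, i < j ∧ j ≤ n ∧ f i = f j := by
        rcases lt_or_gt_of_ne hab with h | h
        · exact ⟨a, b, ⟨h, by omega, heq⟩⟩
        · exact ⟨b, a, ⟨h, by omega, heq.symm⟩⟩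
      obtain ⟨hjn, hfij⟩ := hfij
      set g : ℕ → X := fun t => if t ≤ i then f t else f (t + (j - i)) with hg
      have hlt : n - (j - i) < n := by omega
      have hsteps : Steps R g (n - (j - i)) := by
        intro t ht
        rcases lt_trichotomy t i with h | h | h
        · have e1 : g t = f t := if_pos (by omega)
          have e2 : g (t+1) = f (t+1) := if_pos (by omega)
          rw [e1, e2]; exact hf t (by omega)
        · subst h
          have e1 : g t = f j := by simp only [hg, if_pos (le_refl t)]; exact hfij
          have e2 : g (t+1) = f (j+1) := by
            simp only [hg, if_neg (by omega : ¬ t + 1 ≤ t)]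
            congr 1; omega
          rw [e1, e2]; exact hf j (by omega)
        · have e1 : g t = f (t + (j - i)) := if_neg (by omega)
          have e2 : g (t+1) = f (t + (j - i) + 1) := by
            simp only [hg, if_neg (by omega : ¬ t + 1 ≤ i)]
            congr 1; omega
          rw [e1, e2]; exact hf (t + (j - i)) (by omega)
      have h0 : g 0 = f 0 := if_pos (by omega)
      have hend : g (n - (j - i)) = f n := by
        by_cases h : n - (j - i) ≤ i
        · have hji : j = n := by omega
          have : n - (j - i) = i := by omega
          rw [this]; simp only [hg, if_pos (le_refl i)]
          rw [hfij, hji]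
        · simp only [hg, if_neg h]; congr 1; omega
      obtain ⟨n', f', hb, h1, h2, h3⟩ := ih _ hlt g hsteps
      exact ⟨n', f', hb, h1.trans h0, h2.trans hend, h3⟩

lemma reflTransGen_steps {R : X → X → Prop} {x y : X} (h : Relation.ReflTransGen R x y) :
    ∃ n f, f 0 = x ∧ f n = y ∧ Steps R f n := by
  induction h with
  | refl => exact ⟨0, fun _ => x, rfl, rfl, fun i hi => by omega⟩
  | @tail b c hab hbc ih =>
    obtain ⟨n, f, h0, hn, hs⟩ := ih
    refine ⟨n + 1, fun t => if t ≤ n then f t else c, by simp [h0], by simp, ?_⟩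
    intro t ht
    by_cases h : t < n
    · simp only [if_pos (by omega : t ≤ n), if_pos (by omega : t + 1 ≤ n)]
      exact hs t h
    · have : t = n := by omega
      subst this
      simp only [if_pos (le_refl t), if_neg (by omega : ¬ t + 1 ≤ t)]
      rw [hn]; exact hbc

lemma reach_shorten [Fintype X] {R : X → X → Prop} {x y : X} (h : Relation.ReflTransGen R x y) :
    ∃ n f, n + 1 ≤ Fintype.card X ∧ f 0 = x ∧ f n = y ∧ Steps R f n := by
  obtain ⟨n, f, h0, hn, hs⟩ := reflTransGen_steps h
  obtain ⟨n', f', hb, h1, h2, h3⟩ := steps_shorten n f hs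
  exact ⟨n', f', hb, h1.trans h0, h2.trans hn, h3⟩

def cat (f g : ℕ → X) (n : ℕ) : ℕ → X := fun t => if t < n then f t else g (t - n)

lemma cat_right {f g : ℕ → X} {n t : ℕ} (h : n ≤ t) : cat f g n t = g (t - n) :=
  if_neg (by omega)

lemma cat_left {f g : ℕ → X} {n t : ℕ} (hg : g 0 = f n) (h : t ≤ n) : cat f g n t = f t := by
  rcases lt_or_eq_of_le h with h' | h'
  · exact if_pos h'
  · subst h'; rw [cat_right (le_refl t)]; simpa using hg

lemma cat_steps {R : X → X → Prop} {f g : ℕ → X} {n m : ℕ}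
    (hf : Steps R f n) (hg : Steps R g m) (hfg : g 0 = f n) :
    Steps R (cat f g n) (n + m) := by
  intro t ht
  by_cases h : t < n
  · rw [cat_left hfg (by omega), cat_left hfg (by omega)]
    exact hf t h
  · rw [cat_right (by omega), cat_right (by omega)]
    have : t + 1 - n = (t - n) + 1 := by omega
    rw [this]
    exact hg (t - n) (by omega)

lemma cat_steps_inf {R : X → X → Prop} {f g : ℕ → X} {n : ℕ}
    (hf : Steps R f n) (hg : ∀ t, R (g t) (g (t+1))) (hfg : g 0 = f n) :
    ∀ t, R (cat f g n t) (cat f g n (t+1)) := by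
  intro t
  by_cases h : t < n
  · rw [cat_left hfg (by omega), cat_left hfg (by omega)]
    exact hf t h
  · rw [cat_right (by omega), cat_right (by omega)]
    have : t + 1 - n = (t - n) + 1 := by omega
    rw [this]
    exact hg (t - n)

lemma seg_reach {R : X → X → Prop} (ρ : ℕ → X) (a : ℕ) :
    ∀ b, a ≤ b → (∀ t, a ≤ t → t < b → R (ρ t) (ρ (t+1))) →
    Relation.ReflTransGen R (ρ a) (ρ b) := by
  intro b
  induction b with
  | zero =>
    intro hab _
    rw [show a = 0 by omega]
  | succ b ih =>
    intro hab h
    rcases eq_or_lt_of_le hab with h' | h'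
    · rw [h']
    · exact Relation.ReflTransGen.tail
        (ih (by omega) (fun t ht1 ht2 => h t ht1 (by omega)))
        (h b (by omega) (by omega))

lemma exists_bound [Fintype X] (π : ℕ → X) (P : X → Prop)
    (h : ∀ x, ¬ P x → ∃ N, ∀ n, N ≤ n → π n ≠ x) :
    ∃ N, ∀ n, N ≤ n → P (π n) := by
  choose! g hg using h
  refine ⟨Finset.univ.sup g, fun n hn => ?_⟩
  by_contra hP
  exact hg (π n) hP n (le_trans (Finset.le_sup (Finset.mem_univ _)) hn) rfl

lemma not_infOcc {π : ℕ → X} {x : X} (h : ¬ InfOcc π x) : ∃ N, ∀ n, N ≤ n → π n ≠ x := by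
  unfold InfOcc at h
  push_neg at h
  obtain ⟨N, hN⟩ := h
  exact ⟨N, fun n hn => hN n hn⟩

lemma steps_mem {R : X → X → Prop} {Sp : X → Prop} {f : ℕ → X} {n : ℕ}
    (hf : Steps R f n) (h0 : Sp (f 0)) (hR : ∀ a b, R a b → Sp b) :
    ∀ i, i ≤ n → Sp (f i) := by
  intro i
  induction i with
  | zero => intro _; exact h0
  | succ i ih => intro h; exact hR _ _ (hf i (by omega))

lemma infOcc_shift {δ γ : ℕ → X} {a : ℕ} (h : ∀ t, a ≤ t → δ t = γ (t - a)) (v : X) :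
    InfOcc δ v ↔ InfOcc γ v := by
  constructor
  · intro H N
    obtain ⟨n, hn, he⟩ := H (N + a)
    exact ⟨n - a, by omega, by rw [← h n (by omega)]; exact he⟩
  · intro H N
    obtain ⟨n, hn, he⟩ := H N
    refine ⟨n + a, by omega, ?_⟩
    rw [h (n + a) (by omega)]
    simpa using he

lemma infOcc_per {c : ℕ → X} {p : ℕ} (hp : 1 ≤ p) (v : X) :
    InfOcc (fun t => c (t % p)) v ↔ ∃ i, i < p ∧ c i = v := by
  constructor
  · intro H
    obtain ⟨n, _, he⟩ := H 0
    exact ⟨n % p, Nat.mod_lt _ (by omega), he⟩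
  · rintro ⟨i, hip, hi⟩ N
    refine ⟨i + p * N, by nlinarith, ?_⟩
    simp only [Nat.add_mul_mod_self_left]
    rw [Nat.mod_eq_of_lt hip]; exact hi

lemma per_steps {R : X → X → Prop} {c : ℕ → X} {p : ℕ} (hp : 1 ≤ p)
    (hc : Steps R c p) (hcp : c p = c 0) :
    ∀ t, R (c (t % p)) (c ((t + 1) % p)) := by
  intro t
  set r := t % p with hr
  have hrp : r < p := Nat.mod_lt _ (by omega)
  have hdm := Nat.div_add_mod t p
  by_cases h : r + 1 < p
  · have e : (t + 1) % p = r + 1 := by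
      have : t + 1 = (r + 1) + p * (t / p) := by omega
      rw [this, Nat.add_mul_mod_self_left, Nat.mod_eq_of_lt h]
    rw [e]; exact hc r hrp
  · have hr1 : r + 1 = p := by omega
    have e : (t + 1) % p = 0 := by
      have hh : p * (t / p + 1) = p * (t / p) + p := by ring
      have : t + 1 = p * (t / p + 1) := by omega
      rw [this, Nat.mul_mod_right]
    rw [e, ← hcp, ← hr1]
    exact hc r hrp

lemma visit_walk {R : X → X → Prop} {P : X → Prop} {B : ℕ}
    (hreach : ∀ x y, P x → P y → ∃ n f, n ≤ B ∧ f 0 = x ∧ f n = y ∧ Steps R f n) :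
    ∀ (l : List X) (z : X), P z → (∀ s ∈ l, P s) →
    ∃ n f, n ≤ l.length * B ∧ f 0 = z ∧ P (f n) ∧ Steps R f n ∧
      ∀ s ∈ l, ∃ t, t ≤ n ∧ f t = s := by
  intro l
  induction l with
  | nil =>
    intro z hz _
    exact ⟨0, fun _ => z, by simp, rfl, hz, fun i hi => by omega, by simp⟩
  | cons s l ih =>
    intro z hz hl
    obtain ⟨n1, f1, hn1, h10, h1e, h1s⟩ := hreach z s hz (hl s (by simp))
    obtain ⟨n2, f2, hn2, h20, h2P, h2s, h2v⟩ :=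
      ih s (hl s (by simp)) (fun t ht => hl t (by simp [ht]))
    have hfg : f2 0 = f1 n1 := by rw [h20, h1e]
    refine ⟨n1 + n2, cat f1 f2 n1, ?_, ?_, ?_, cat_steps h1s h2s hfg, ?_⟩
    · have : (s :: l).length * B = l.length * B + B := by simp [Nat.succ_mul]
      omega
    · rw [cat_left hfg (by omega)]; exact h10
    · rw [cat_right (by omega)]; simpa using h2P
    · intro x hx
      rcases List.mem_cons.mp hx with h | h
      · subst h
        exact ⟨n1, by omega, by rw [cat_left hfg (le_refl n1), h1e]⟩
      · obtain ⟨t, ht, hft⟩ := h2v x h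
        refine ⟨n1 + t, by omega, ?_⟩
        rw [cat_right (by omega)]
        simpa using hft

lemma infOcc_fst {V Q : Type*} [Fintype V] [Fintype Q] (γ : ℕ → V × Q) (v : V) :
    InfOcc (fun n => (γ n).1) v ↔ ∃ q, InfOcc γ (v, q) := by
  constructor
  · intro H
    by_contra hq
    push_neg at hq
    have hb : ∃ N, ∀ n, N ≤ n → (fun x : V × Q => x.1 ≠ v) (γ n) := by
      apply exists_bound γ (fun x : V × Q => x.1 ≠ v)
      intro x hx
      push_neg at hx
      have : x = (v, x.2) := by rw [← hx]
      rw [this]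
      exact not_infOcc (hq x.2)
    obtain ⟨N, hN⟩ := hb
    obtain ⟨n, hn, he⟩ := H N
    exact hN n hn he
  · rintro ⟨q, H⟩ N
    obtain ⟨n, hn, he⟩ := H N
    exact ⟨n, hn, show (γ n).1 = v by rw [he]⟩

lemma parityAccept_congr {κ : X → ℕ} {π π' : ℕ → X} (h : ∀ v, InfOcc π v ↔ InfOcc π' v) :
    ParityAccept κ π ↔ ParityAccept κ π' := by
  constructor
  · rintro ⟨v, h1, h2, h3⟩
    exact ⟨v, (h v).mp h1, h2, fun w hw => h3 w ((h w).mpr hw)⟩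
  · rintro ⟨v, h1, h2, h3⟩
    exact ⟨v, (h v).mpr h1, h2, fun w hw => h3 w ((h w).mp hw)⟩

lemma payoff_congr (κ : X → ℕ) {π π' : ℕ → X} (h : ∀ v, InfOcc π v ↔ InfOcc π' v) :
    parityPayoff κ π = parityPayoff κ π' := by
  unfold parityPayoff
  by_cases h' : ParityAccept κ π
  · rw [if_pos h', if_pos ((parityAccept_congr h).mp h')]
  · rw [if_neg h', if_neg (fun hc => h' ((parityAccept_congr h).mpr hc))]

lemma tail_lasso [Fintype X] (ρ : ℕ → X) (j : ℕ) :
    ∃ (m p : ℕ) (γ : ℕ → X),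
      γ 0 = ρ j ∧
      m + 1 ≤ Fintype.card X ∧ 1 ≤ p ∧ p ≤ Fintype.card X ^ 2 ∧
      (∀ t, m ≤ t → γ (t + p) = γ t) ∧
      (∀ t, ∃ s, ρ s = γ t ∧ ρ (s + 1) = γ (t + 1)) ∧
      (∀ v, InfOcc γ v ↔ InfOcc ρ v) := by
  set N := Fintype.card X with hN
  have hN1 : 1 ≤ N := Fintype.card_pos_iff.mpr ⟨ρ 0⟩
  set S : Set X := {x | InfOcc ρ x} with hS
  obtain ⟨M0, hM0⟩ : ∃ M0, ∀ n, M0 ≤ n → ρ n ∈ S :=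
    exists_bound ρ (· ∈ S) (fun x hx => not_infOcc hx)
  set E' : X → X → Prop := fun a b => ∃ s, M0 ≤ s ∧ ρ s = a ∧ ρ (s+1) = b with hE'
  set Eρ : X → X → Prop := fun a b => ∃ s, ρ s = a ∧ ρ (s+1) = b with hEρ
  have hE'sub : ∀ a b, E' a b → Eρ a b := by rintro a b ⟨s, _, h1, h2⟩; exact ⟨s, h1, h2⟩
  have hE'S : ∀ a b, E' a b → b ∈ S := by
    rintro a b ⟨s, hs, _, h2⟩
    rw [← h2]; exact hM0 _ (by omega)
  have hocc : ∀ x ∈ S, ∀ K, ∃ a, K ≤ a ∧ ρ a = x := by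
    intro x hx K
    obtain ⟨a, ha, he⟩ := hx K
    exact ⟨a, ha, he⟩
  have hreach : ∀ x y, x ∈ S → y ∈ S → Relation.ReflTransGen E' x y := by
    intro x y hx hy
    obtain ⟨a, ha, hax⟩ := hocc x hx M0
    obtain ⟨b, hb, hby⟩ := hocc y hy a
    rw [← hax, ← hby]
    exact seg_reach ρ a b hb (fun t ht _ => ⟨t, by omega, rfl, rfl⟩)
  have hB : ∀ x y, x ∈ S → y ∈ S →
      ∃ n f, n ≤ N - 1 ∧ f 0 = x ∧ f n = y ∧ Steps E' f n := by
    intro x y hx hy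
    obtain ⟨n, f, hb, h0, he, hs⟩ := reach_shorten (hreach x y hx hy)
    exact ⟨n, f, by omega, h0, he, hs⟩
  set l : List X := (Finset.univ.filter (fun x => x ∈ S)).toList with hl
  have hlmem : ∀ x, x ∈ l ↔ x ∈ S := by
    intro x; simp [hl, Finset.mem_toList]
  have hllen : l.length ≤ N := by
    rw [hl, Finset.length_toList]
    exact (Finset.card_filter_le _ _).trans (by simp [hN])
  set y : X := ρ (max j M0) with hy
  have hyS : y ∈ S := hM0 _ (le_max_right _ _)
  obtain ⟨n1, f1, hn1, h10, h1S, h1s, h1v⟩ :=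
    visit_walk hB l y hyS (fun s hs => (hlmem s).mp hs)
  set w : X := f1 n1 with hw
  obtain ⟨a, ha, haw⟩ := hocc w h1S M0
  obtain ⟨b, hb, hby⟩ := hocc y hyS (a + 1)
  have hclose1 : Relation.ReflTransGen E' (ρ (a+1)) y := by
    rw [← hby]
    exact seg_reach ρ (a+1) b hb (fun t ht _ => ⟨t, by omega, rfl, rfl⟩)
  obtain ⟨n2, f2, hn2, h20, h2e, h2s⟩ := reach_shorten hclose1
  set g : ℕ → X := fun t => if t = 0 then w else f2 (t - 1) with hg
  set nc : ℕ := n2 + 1 with hnc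
  have hgs : Steps E' g nc := by
    intro t ht
    by_cases h : t = 0
    · subst h
      simp only [hg, if_pos rfl, if_neg (by omega : ¬ (0:ℕ) + 1 = 0)]
      have : f2 (0 + 1 - 1) = ρ (a + 1) := by simpa using h20
      rw [this, ← haw]
      exact ⟨a, ha, rfl, rfl⟩
    · simp only [hg, if_neg h, if_neg (by omega : ¬ t + 1 = 0)]
      have e : t + 1 - 1 = (t - 1) + 1 := by omega
      rw [e]
      exact h2s (t - 1) (by omega)
  have hg0 : g 0 = w := by simp [hg]
  have hgnc : g nc = y := by
    simp only [hg, hnc, if_neg (by omega : ¬ n2 + 1 = 0)]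
    simpa using h2e
  set c : ℕ → X := cat f1 g n1 with hc
  set p : ℕ := n1 + nc with hp
  have hp1 : 1 ≤ p := by omega
  have hc0 : c 0 = y := by rw [hc, cat_left (by rw [hg0, hw]) (by omega)]; exact h10
  have hcs : Steps E' c p := cat_steps h1s hgs (by rw [hg0, hw])
  have hcp : c p = c 0 := by
    have e1 : c p = g nc := by
      rw [hc, hp, cat_right (by omega : n1 ≤ n1 + nc)]
      congr 1
      omega
    rw [e1, hgnc, hc0]
  have hpbound : p ≤ N ^ 2 := by
    have h1 : n1 ≤ N * (N - 1) := hn1.trans (Nat.mul_le_mul_right _ hllen)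
    have h2 : N * (N - 1) + N = N ^ 2 := by
      obtain ⟨K, hK⟩ : ∃ K, N = K + 1 := ⟨N - 1, by omega⟩
      rw [hK]
      simp only [Nat.succ_sub_one]
      ring
    omega
  have hcS : ∀ i, i ≤ p → c i ∈ S := steps_mem hcs (by rw [hc0]; exact hyS) hE'S
  have hcAll : ∀ v ∈ S, ∃ i, i < p ∧ c i = v := by
    intro v hv
    obtain ⟨t, ht, hft⟩ := h1v v ((hlmem v).mpr hv)
    refine ⟨t, by omega, ?_⟩
    rw [hc, cat_left (by rw [hg0, hw]) (by omega)]
    exact hft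
  set cper : ℕ → X := fun t => c (t % p) with hcper
  have hcpers : ∀ t, E' (cper t) (cper (t + 1)) := per_steps hp1 hcs hcp
  have hjy : Relation.ReflTransGen Eρ (ρ j) y := by
    rw [hy]
    exact seg_reach ρ j (max j M0) (le_max_left _ _) (fun t _ _ => ⟨t, rfl, rfl⟩)
  obtain ⟨m, W2, hmN, hW20, hW2e, hW2s⟩ := reach_shorten hjy
  set γ : ℕ → X := cat W2 cper m with hγ
  have hcper0 : cper 0 = W2 m := by
    rw [hW2e]
    simp only [hcper, Nat.zero_mod]
    exact hc0
  have hγ0 : γ 0 = ρ j := by rw [hγ, cat_left hcper0 (by omega)]; exact hW20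
  have hγper : ∀ t, m ≤ t → γ (t + p) = γ t := by
    intro t ht
    rw [hγ, cat_right (by omega), cat_right (by omega)]
    have e : t + p - m = (t - m) + p := by omega
    rw [e]
    simp only [hcper, Nat.add_mod_right]
  have hγs : ∀ t, Eρ (γ t) (γ (t + 1)) :=
    cat_steps_inf hW2s (fun t => hE'sub _ _ (hcpers t)) hcper0
  have hγInf : ∀ v, InfOcc γ v ↔ InfOcc ρ v := by
    intro v
    have e1 : InfOcc γ v ↔ InfOcc cper v :=
      infOcc_shift (fun t ht => cat_right ht) v
    have e2 : InfOcc cper v ↔ ∃ i, i < p ∧ c i = v := infOcc_per hp1 v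
    rw [e1, e2]
    constructor
    · rintro ⟨i, hip, rfl⟩
      exact hcS i (by omega)
    · intro hv
      exact hcAll v hv
  exact ⟨m, p, γ, hγ0, hmN, hp1, hpbound, hγper, fun t => hγs t, hγInf⟩

end Aux

/-- In a parity game, any witness pair in the product graph (with `N` vertices)
can be replaced by a witness pair of lassos of polynomial size: prefixes of length
at most `2N`, cycles of length at most `N²`, with the same payoffs for every player,
and such that the players deviating along the new deviating path already deviated
along the original one. -/
theorem stmt5 (ι V : Type*) [Fintype V] (G : Arena ι V) (v0 : V)
    (M : Mealy G) (fQ : Fintype M.Q)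
    (κ : ι → V → ℕ)
    (μ : ι → (ℕ → V) → ℝ) (hμ : ∀ i π, μ i π = parityPayoff (κ i) π)
    (α β : ℕ → V × M.Q) (hwit : WitnessPair G v0 M μ α β) :
    ∃ (α' β' : ℕ → V × M.Q),
      WitnessPair G v0 M μ α' β' ∧
      (∃ m p, m ≤ 2 * (Fintype.card V * @Fintype.card M.Q fQ) ∧
        p ≤ (Fintype.card V * @Fintype.card M.Q fQ) ^ 2 ∧ IsLasso m p α') ∧
      (∃ m p, m ≤ 2 * (Fintype.card V * @Fintype.card M.Q fQ) ∧
        p ≤ (Fintype.card V * @Fintype.card M.Q fQ) ^ 2 ∧ IsLasso m p β') ∧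
      (∀ i, μ i (fun n => (α' n).1) = μ i (fun n => (α n).1)) ∧
      (∀ i, μ i (fun n => (β' n).1) = μ i (fun n => (β n).1)) ∧
      (∀ j, (∃ n, IsDevEdgeBy G M j (β' n) (β' (n + 1))) →
        ∃ n, IsDevEdgeBy G M j (β n) (β (n + 1))) := by
  classical
  letI : Fintype M.Q := fQ
  obtain ⟨hPα, hPβ, hNoDev, hBranch, ⟨i0, hi0⟩, hDevPay⟩ := hwit
  -- first deviation point
  have hne : ∃ n, α n ≠ β n := by
    by_contra h
    push_neg at h
    have he : (fun n => (β n).1) = (fun n => (α n).1) := funext fun n => by rw [h n]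
    rw [he] at hi0
    exact lt_irrefl _ hi0
  set k0 := Nat.find hne with hk0def
  have hk0 : α k0 ≠ β k0 := Nat.find_spec hne
  have hk0min : ∀ m, m < k0 → α m = β m := fun m hm => not_not.mp (Nat.find_min hne hm)
  obtain ⟨hk0ne, hdev⟩ := hBranch k0 ⟨hk0min, hk0⟩
  have hprev : α (k0 - 1) = β (k0 - 1) := hk0min _ (by omega)
  set N := Fintype.card (V × M.Q) with hNdef
  have hNcard : N = Fintype.card V * Fintype.card M.Q := Fintype.card_prod _ _
  set Eα : (V × M.Q) → (V × M.Q) → Prop := fun a b => ∃ s, α s = a ∧ α (s+1) = b with hEα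
  set Eβ : (V × M.Q) → (V × M.Q) → Prop := fun a b => ∃ s, β s = a ∧ β (s+1) = b with hEβ
  have hreachx : Relation.ReflTransGen Eα (α 0) (α (k0 - 1)) :=
    seg_reach α 0 (k0 - 1) (by omega) (fun t _ _ => ⟨t, rfl, rfl⟩)
  obtain ⟨n1, P1, hn1N, hP10, hP1e, hP1s⟩ := reach_shorten hreachx
  set W : ℕ → V × M.Q := fun t => if t ≤ n1 then P1 t else α k0 with hWdef
  set W' : ℕ → V × M.Q := fun t => if t ≤ n1 then P1 t else β k0 with hW'def
  obtain ⟨mα, pα, γα, hγα0, hmαN, hpα1, hpαN, hγαper, hγαe, hγαInf⟩ := tail_lasso α k0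
  obtain ⟨mβ, pβ, γβ, hγβ0, hmβN, hpβ1, hpβN, hγβper, hγβe, hγβInf⟩ := tail_lasso β k0
  have hWs : Steps Eα W (n1 + 1) := by
    intro t ht
    by_cases h : t < n1
    · simp only [hWdef, if_pos (by omega : t ≤ n1), if_pos (by omega : t + 1 ≤ n1)]
      exact hP1s t h
    · have : t = n1 := by omega
      subst this
      simp only [hWdef, if_pos (le_refl t), if_neg (by omega : ¬ t + 1 ≤ t)]
      refine ⟨k0 - 1, hP1e.symm, ?_⟩
      congr 1
      omega
  have hW's : Steps (fun a b => Eα a b ∨ Eβ a b) W' (n1 + 1) := by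
    intro t ht
    by_cases h : t < n1
    · simp only [hW'def, if_pos (by omega : t ≤ n1), if_pos (by omega : t + 1 ≤ n1)]
      exact Or.inl (hP1s t h)
    · have : t = n1 := by omega
      subst this
      simp only [hW'def, if_pos (le_refl t), if_neg (by omega : ¬ t + 1 ≤ t)]
      refine Or.inr ⟨k0 - 1, ?_, ?_⟩
      · rw [← hprev]; exact hP1e.symm
      · congr 1
        omega
  have hγα0W : γα 0 = W (n1 + 1) := by
    simp only [hWdef, if_neg (by omega : ¬ n1 + 1 ≤ n1)]
    exact hγα0
  have hγβ0W : γβ 0 = W' (n1 + 1) := by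
    simp only [hW'def, if_neg (by omega : ¬ n1 + 1 ≤ n1)]
    exact hγβ0
  set α' : ℕ → V × M.Q := cat W γα (n1 + 1) with hα'def
  set β' : ℕ → V × M.Q := cat W' γβ (n1 + 1) with hβ'def
  have hαe : ∀ t, Eα (α' t) (α' (t + 1)) :=
    cat_steps_inf hWs (fun t => hγαe t) hγα0W
  have hβe : ∀ t, Eα (β' t) (β' (t + 1)) ∨ Eβ (β' t) (β' (t + 1)) :=
    cat_steps_inf hW's (fun t => Or.inr (hγβe t)) hγβ0W
  -- values
  have hαval : ∀ t, t ≤ n1 → α' t = P1 t := by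
    intro t ht
    rw [hα'def, cat_left hγα0W (by omega)]
    simp only [hWdef, if_pos ht]
  have hβval : ∀ t, t ≤ n1 → β' t = P1 t := by
    intro t ht
    rw [hβ'def, cat_left hγβ0W (by omega)]
    simp only [hW'def, if_pos ht]
  have hα'top : α' (n1 + 1) = α k0 := by
    rw [hα'def, cat_right (le_refl _)]
    simpa using hγα0
  have hβ'top : β' (n1 + 1) = β k0 := by
    rw [hβ'def, cat_right (le_refl _)]
    simpa using hγβ0
  have hβ'n1 : β' n1 = β (k0 - 1) := by
    rw [hβval n1 (le_refl n1), hP1e, hprev]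
  -- payoff preservation
  have hInfα : ∀ x, InfOcc α' x ↔ InfOcc α x := by
    intro x
    exact (infOcc_shift (a := n1 + 1) (fun t ht => cat_right ht) x).trans (hγαInf x)
  have hInfβ : ∀ x, InfOcc β' x ↔ InfOcc β x := by
    intro x
    exact (infOcc_shift (a := n1 + 1) (fun t ht => cat_right ht) x).trans (hγβInf x)
  have hprojα : ∀ v : V, InfOcc (fun n => (α' n).1) v ↔ InfOcc (fun n => (α n).1) v := by
    intro v
    rw [infOcc_fst, infOcc_fst]
    exact exists_congr fun q => hInfα (v, q)
  have hprojβ : ∀ v : V, InfOcc (fun n => (β' n).1) v ↔ InfOcc (fun n => (β n).1) v := by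
    intro v
    rw [infOcc_fst, infOcc_fst]
    exact exists_congr fun q => hInfβ (v, q)
  have hpayα : ∀ i, μ i (fun n => (α' n).1) = μ i (fun n => (α n).1) := by
    intro i
    rw [hμ, hμ]
    exact payoff_congr (κ i) hprojα
  have hpayβ : ∀ i, μ i (fun n => (β' n).1) = μ i (fun n => (β n).1) := by
    intro i
    rw [hμ, hμ]
    exact payoff_congr (κ i) hprojβ
  -- deviating edges of β' come from β
  have hdevtrans : ∀ j n, IsDevEdgeBy G M j (β' n) (β' (n + 1)) →
      ∃ s, IsDevEdgeBy G M j (β s) (β (s + 1)) := by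
    intro j n hd
    rcases hβe n with ⟨s, h1, h2⟩ | ⟨s, h1, h2⟩
    · exfalso
      apply hNoDev s
      rw [h1, h2]
      exact hd.1
    · exact ⟨s, by rw [h1, h2]; exact hd⟩
  refine ⟨α', β', ⟨?_, ?_, ?_, ?_, ?_, ?_⟩, ?_, ?_, hpayα, hpayβ, fun j hj => by
    obtain ⟨n, hd⟩ := hj; exact hdevtrans j n hd⟩
  · -- ProdPath α'
    constructor
    · rw [hαval 0 (by omega), hP10]
      exact hPα.1
    · intro n
      obtain ⟨s, h1, h2⟩ := hαe n
      rw [← h1, ← h2]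
      exact hPα.2 s
  · -- ProdPath β'
    constructor
    · rw [hβval 0 (by omega), hP10]
      exact hPα.1
    · intro n
      rcases hβe n with ⟨s, h1, h2⟩ | ⟨s, h1, h2⟩
      · rw [← h1, ← h2]; exact hPα.2 s
      · rw [← h1, ← h2]; exact hPβ.2 s
  · -- no deviating edges along α'
    intro n
    obtain ⟨s, h1, h2⟩ := hαe n
    rw [← h1, ← h2]
    exact hNoDev s
  · -- branch condition
    intro k ⟨hpre, hdiff⟩
    have hk : k = n1 + 1 := by
      by_contra hkne
      rcases lt_or_gt_of_ne hkne with h | h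
      · exact hdiff ((hαval k (by omega)).trans (hβval k (by omega)).symm)
      · have := hpre (n1 + 1) (by omega)
        rw [hα'top, hβ'top] at this
        exact hk0 this
    subst hk
    refine ⟨by omega, ?_⟩
    have e : n1 + 1 - 1 = n1 := by omega
    rw [e, hβ'n1, hβ'top]
    exact hdev
  · -- strict improvement for some player
    exact ⟨i0, by rw [hpayα i0, hpayβ i0]; exact hi0⟩
  · -- deviators don't lose
    intro j hj
    obtain ⟨n, hd⟩ := hj
    obtain ⟨s, hds⟩ := hdevtrans j n hd
    rw [hpayα j, hpayβ j]
    exact hDevPay j ⟨s, hds⟩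
  · -- α' lasso bounds
    refine ⟨n1 + 1 + mα, pα, by rw [← hNcard]; omega, by rw [← hNcard]; exact hpαN, hpα1, ?_⟩
    intro k hk
    rw [hα'def, cat_right (by omega), cat_right (by omega)]
    have e : k + pα - (n1 + 1) = (k - (n1 + 1)) + pα := by omega
    rw [e]
    exact hγαper _ (by omega)
  · -- β' lasso bounds
    refine ⟨n1 + 1 + mβ, pβ, by rw [← hNcard]; omega, by rw [← hNcard]; exact hpβN, hpβ1, ?_⟩
    intro k hk
    rw [hβ'def, cat_right (by omega), cat_right (by omega)]
    have e : k + pβ - (n1 + 1) = (k - (n1 + 1)) + pβ := by omega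
    rw [e]
    exact hγβper _ (by omega)

end
end Stmt5
end

section
/- Let G_{‖v₀} be a game on a finite graph with Boolean payoffs, x̄ a payoff vector, and Corr a correctness condition on plays. Prover has a winning strategy in the deviator game Dev_{x̄,Corr} G_{‖v₀} if and only if there exists a strong secure equilibrium σ̄ in G_{‖v₀} with μ(⟨σ̄⟩) = x̄ and ⟨σ̄⟩ ⊨ Corr. -/
/-!
A strategy profile `σ` gives the Prover strategy that proposes `σ`'s moves. Conversely, from a
Prover strategy every player can reconstruct, out of a history of `G`, the history of the
deviator game (Challenger accepted exactly when the next vertex is the proposal) and play the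
proposal. Challenger strategies amount to plays of `G`, and the deviators of a play are the
owners of the vertices where it leaves the proposal. Against the profile `σ`, the deviators of
a play form a coalition that can force it, so a Challenger win after a deviation is a harmful
deviation from `σ`; conversely a coalition's deviation yields a play whose deviators lie in the
coalition. Without deviation the play is `⟨σ⟩`, and Prover wins it iff it has payoff `x̄` and
satisfies `Corr`.
-/

namespace Stmt6

noncomputable section
open Classical

structure Arena (ι V : Type*) where
  owner : V → ι
  E : V → V → Prop
  nosink : ∀ v, ∃ w, E v w

def Strat {ι V : Type*} (G : Arena ι V) :=
  {f : List V → V → V // ∀ h v, G.E v (f h v)}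

def histFun {ι V : Type*} (G : Arena ι V) (σ : ι → Strat G) (v0 : V) :
    ℕ → List V × V
  | 0 => ([], v0)
  | n + 1 =>
    let p := histFun G σ v0 n
    (p.1 ++ [p.2], (σ (G.owner p.2)).1 p.1 p.2)

def play {ι V : Type*} (G : Arena ι V) (σ : ι → Strat G) (v0 : V) : ℕ → V :=
  fun n => (histFun G σ v0 n).2

def combine {ι V : Type*} {G : Arena ι V} (C : Set ι) (σ σ' : ι → Strat G) :
    ι → Strat G :=
  fun i => if i ∈ C then σ' i else σ i

def HarmfulDev {ι V : Type*} (G : Arena ι V) (μ : ι → (ℕ → V) → ℝ)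
    (v0 : V) (σ : ι → Strat G) (C : Set ι) (σ' : ι → Strat G) : Prop :=
  (∀ i ∈ C, μ i (play G σ v0) ≤ μ i (play G (combine C σ σ') v0)) ∧
  (∃ j, j ∉ C ∧ μ j (play G (combine C σ σ') v0) < μ j (play G σ v0))

def IsSSE {ι V : Type*} (G : Arena ι V) (μ : ι → (ℕ → V) → ℝ)
    (v0 : V) (σ : ι → Strat G) : Prop :=
  ¬ ∃ (C : Set ι) (σ' : ι → Strat G), HarmfulDev G μ v0 σ C σ'

/-- Prover vertices of the deviator game: a game vertex together with the current
set of deviators. -/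
abbrev PV (ι V : Type*) := V × Set ι

/-- A Prover strategy proposes a successor vertex; it is valid if its proposals
follow edges of the game. The history records past positions and proposals. -/
def PStratValid {ι V : Type*} (G : Arena ι V)
    (sP : List (PV ι V × V) → PV ι V → V) : Prop :=
  ∀ h x, G.E x.1 (sP h x)

/-- A Challenger strategy either accepts Prover's proposal, or deviates to another
successor, adding the owner of the current vertex to the set of deviators. -/
def CStratValid {ι V : Type*} (G : Arena ι V)
    (sC : List (PV ι V × V) → PV ι V → V → PV ι V) : Prop :=
  ∀ h x p, sC h x p = (p, x.2) ∨
    ∃ w, w ≠ p ∧ G.E x.1 w ∧ sC h x p = (w, x.2 ∪ {G.owner x.1})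

/-- History and current position of the deviator game after `n` rounds. -/
def devAux {ι V : Type*} (G : Arena ι V)
    (sP : List (PV ι V × V) → PV ι V → V)
    (sC : List (PV ι V × V) → PV ι V → V → PV ι V)
    (init : PV ι V) : ℕ → List (PV ι V × V) × PV ι V
  | 0 => ([], init)
  | n + 1 =>
    let p := devAux G sP sC init n
    (p.1 ++ [(p.2, sP p.1 p.2)], sC p.1 p.2 (sP p.1 p.2))

def devPos {ι V : Type*} (G : Arena ι V)
    (sP : List (PV ι V × V) → PV ι V → V)
    (sC : List (PV ι V × V) → PV ι V → V → PV ι V)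
    (init : PV ι V) (n : ℕ) : PV ι V :=
  (devAux G sP sC init n).2

/-- Challenger wins a play of the deviator game (given by its sequence of
Prover positions) iff either no one deviated and the produced play does not have
payoff `x̄` or does not satisfy `Corr`, or someone deviated, every deviator gets at
least their payoff in `x̄`, and some non-deviator gets strictly less. -/
def ChallengerWins {ι V : Type*} (μ : ι → (ℕ → V) → ℝ) (xbar : ι → ℝ)
    (Corr : Set (ℕ → V)) (pos : ℕ → PV ι V) : Prop :=
  ((∀ n, (pos n).2 = ∅) ∧
    ((∃ i, μ i (fun n => (pos n).1) ≠ xbar i) ∨ (fun n => (pos n).1) ∉ Corr)) ∨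
  ((∃ n, (pos n).2 ≠ ∅) ∧
    (∀ i, (∃ n, i ∈ (pos n).2) → xbar i ≤ μ i (fun n => (pos n).1)) ∧
    (∃ j, ¬ (∃ n, j ∈ (pos n).2) ∧ μ j (fun n => (pos n).1) < xbar j))

/-- Prover has a winning strategy in the deviator game from `init`. -/
def ProverWins {ι V : Type*} (G : Arena ι V) (μ : ι → (ℕ → V) → ℝ)
    (xbar : ι → ℝ) (Corr : Set (ℕ → V)) (init : PV ι V) : Prop :=
  ∃ sP, PStratValid G sP ∧ ∀ sC, CStratValid G sC →
    ¬ ChallengerWins μ xbar Corr (devPos G sP sC init)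

section

variable {ι V : Type*} (G : Arena ι V)

def IsPlay (v0 : V) (π : ℕ → V) : Prop :=
  π 0 = v0 ∧ ∀ n, G.E (π n) (π (n + 1))

section Profiles

variable {G}

lemma histFun_fst (σ : ι → Strat G) (v0 : V) (n : ℕ) :
    (histFun G σ v0 n).1 = (List.range n).map (play G σ v0) := by
  induction n with
  | zero => rfl
  | succ n ih =>
    change (histFun G σ v0 n).1 ++ [(histFun G σ v0 n).2] = _
    rw [List.range_succ, List.map_append, ih]
    rfl

lemma play_succ (σ : ι → Strat G) (v0 : V) (n : ℕ) :
    play G σ v0 (n + 1) =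
      (σ (G.owner (play G σ v0 n))).1 ((List.range n).map (play G σ v0)) (play G σ v0 n) := by
  change (σ _).1 (histFun G σ v0 n).1 _ = _
  rw [histFun_fst]
  rfl

lemma play_eq_iff {σ : ι → Strat G} {v0 : V} {π : ℕ → V} :
    play G σ v0 = π ↔
      π 0 = v0 ∧ ∀ n, π (n + 1) = (σ (G.owner (π n))).1 ((List.range n).map π) (π n) := by
  constructor
  · rintro rfl
    exact ⟨rfl, play_succ σ v0⟩
  · rintro ⟨h0, hsucc⟩
    have hist : ∀ n, histFun G σ v0 n = ((List.range n).map π, π n) := by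
      intro n
      induction n with
      | zero => rw [h0]; rfl
      | succ n ih =>
        change ((histFun G σ v0 n).1 ++ [(histFun G σ v0 n).2], _) = _
        rw [ih, hsucc, List.range_succ, List.map_append]
        rfl
    exact funext fun n => congrArg Prod.snd (hist n)

lemma isPlay_play (σ : ι → Strat G) (v0 : V) : IsPlay G v0 (play G σ v0) :=
  ⟨rfl, fun n => by rw [play_succ]; exact (σ _).2 _ _⟩

/-- The coalition members follow `π` as long as the history is a prefix of it. -/
lemma exists_play_combine_eq (σ : ι → Strat G) (C : Set ι) {v0 : V} {π : ℕ → V}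
    (hπ : IsPlay G v0 π)
    (hfollow : ∀ n, G.owner (π n) ∉ C →
      π (n + 1) = (σ (G.owner (π n))).1 ((List.range n).map π) (π n)) :
    ∃ σ' : ι → Strat G, play G (combine C σ σ') v0 = π := by
  let σ' : ι → Strat G := fun i =>
    ⟨fun h v => if h = (List.range h.length).map π ∧ v = π h.length
      then π (h.length + 1) else (σ i).1 h v,
     fun h v => by
      dsimp only
      split_ifs with hc
      · rw [hc.2]; exact hπ.2 _
      · exact (σ i).2 h v⟩
  refine ⟨σ', play_eq_iff.2 ⟨hπ.1, fun n => ?_⟩⟩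
  by_cases hC : G.owner (π n) ∈ C
  · simp [combine, hC, σ']
  · simpa [combine, hC] using hfollow n hC

def extendHist (h : List V) (v : V) : ℕ → V :=
  fun k => (h ++ [v]).getD k v

lemma extendHist_range_map (π : ℕ → V) {n k : ℕ} (hk : k ≤ n) :
    extendHist ((List.range n).map π) (π n) k = π k := by
  rcases hk.lt_or_eq with hk | rfl
  · simp [extendHist, List.getD_eq_getElem?_getD, List.getElem?_append_left, hk]
  · simp [extendHist, List.getD_eq_getElem?_getD]

lemma extendHist_length (h : List V) (v : V) : extendHist h v h.length = v := by
  simp [extendHist, List.getD_eq_getElem?_getD]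

end Profiles

section DeviatorGame

variable (sP : List (PV ι V × V) → PV ι V → V)

/-- The deviator-game history and deviator set reconstructed from a play `π` of `G` against
`sP`: Challenger accepted the proposal at step `n` iff `π (n + 1)` is that proposal. -/
def trace (π : ℕ → V) : ℕ → List (PV ι V × V) × Set ι
  | 0 => ([], ∅)
  | n + 1 =>
    let t := trace π n
    let p := sP t.1 (π n, t.2)
    (t.1 ++ [((π n, t.2), p)], if π (n + 1) = p then t.2 else t.2 ∪ {G.owner (π n)})

def proposal (π : ℕ → V) (n : ℕ) : V :=
  sP (trace G sP π n).1 (π n, (trace G sP π n).2)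

def deviators (π : ℕ → V) : Set ι :=
  {i | ∃ k, π (k + 1) ≠ proposal G sP π k ∧ G.owner (π k) = i}

lemma proposal_valid (hsP : PStratValid G sP) (π : ℕ → V) (n : ℕ) :
    G.E (π n) (proposal G sP π n) :=
  hsP (trace G sP π n).1 (π n, (trace G sP π n).2)

lemma trace_succ (π : ℕ → V) (n : ℕ) :
    trace G sP π (n + 1) =
      ((trace G sP π n).1 ++ [((π n, (trace G sP π n).2), proposal G sP π n)],
        if π (n + 1) = proposal G sP π n then (trace G sP π n).2
        else (trace G sP π n).2 ∪ {G.owner (π n)}) := rfl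

lemma trace_congr {π π' : ℕ → V} {n : ℕ} (h : ∀ k ≤ n, π k = π' k) :
    trace G sP π n = trace G sP π' n := by
  induction n with
  | zero => rfl
  | succ n ih =>
    have ih := ih fun k hk => h k (by omega)
    simp only [trace_succ, proposal, ih, h n (by omega), h (n + 1) le_rfl]
    rfl

lemma proposal_congr {π π' : ℕ → V} {n : ℕ} (h : ∀ k ≤ n, π k = π' k) :
    proposal G sP π n = proposal G sP π' n := by
  rw [proposal, proposal, trace_congr G sP h, h n le_rfl]

lemma map_trace_fst (π : ℕ → V) (n : ℕ) :
    (trace G sP π n).1.map (fun q => q.1.1) = (List.range n).map π := by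
  induction n with
  | zero => rfl
  | succ n ih => rw [trace_succ, List.map_append, ih, List.range_succ, List.map_append]; rfl

lemma mem_trace_snd_iff (π : ℕ → V) (n : ℕ) (i : ι) :
    i ∈ (trace G sP π n).2 ↔ ∃ k < n, π (k + 1) ≠ proposal G sP π k ∧ G.owner (π k) = i := by
  induction n with
  | zero => simp [trace]
  | succ n ih =>
    rw [trace_succ]
    split_ifs with hn
    · rw [ih]
      refine ⟨fun ⟨k, hk, hk'⟩ => ⟨k, by omega, hk'⟩, fun ⟨k, hk, hk'⟩ => ⟨k, ?_, hk'⟩⟩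
      rcases Nat.lt_succ_iff_lt_or_eq.1 hk with hk | rfl
      · exact hk
      · exact absurd hn hk'.1
    · simp only [Set.mem_union, ih, Set.mem_singleton_iff]
      constructor
      · rintro (⟨k, hk, hk'⟩ | rfl)
        exacts [⟨k, by omega, hk'⟩, ⟨n, by omega, hn, rfl⟩]
      · rintro ⟨k, hk, hk'⟩
        rcases Nat.lt_succ_iff_lt_or_eq.1 hk with hk | rfl
        exacts [Or.inl ⟨k, hk, hk'⟩, Or.inr hk'.2.symm]

lemma exists_mem_trace_snd_iff (π : ℕ → V) (i : ι) :
    (∃ n, i ∈ (trace G sP π n).2) ↔ i ∈ deviators G sP π := by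
  simp only [mem_trace_snd_iff, deviators, Set.mem_ofPred_eq]
  exact ⟨fun ⟨_, k, _, hk⟩ => ⟨k, hk⟩, fun ⟨k, hk⟩ => ⟨k + 1, k, by omega, hk⟩⟩

lemma deviators_eq_empty_iff (π : ℕ → V) :
    deviators G sP π = ∅ ↔ ∀ n, π (n + 1) = proposal G sP π n := by
  simp [Set.eq_empty_iff_forall_notMem, deviators]

lemma challengerWins_trace_iff (μ : ι → (ℕ → V) → ℝ) (xbar : ι → ℝ) (Corr : Set (ℕ → V))
    (π : ℕ → V) :
    ChallengerWins μ xbar Corr (fun n => (π n, (trace G sP π n).2)) ↔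
      (deviators G sP π = ∅ ∧ ((∃ i, μ i π ≠ xbar i) ∨ π ∉ Corr)) ∨
      ((deviators G sP π).Nonempty ∧ (∀ i ∈ deviators G sP π, xbar i ≤ μ i π) ∧
        ∃ j ∉ deviators G sP π, μ j π < xbar j) := by
  have hempty : (∀ n, (trace G sP π n).2 = ∅) ↔ deviators G sP π = ∅ := by
    simp only [Set.eq_empty_iff_forall_notMem, ← exists_mem_trace_snd_iff]
    exact ⟨fun h i ⟨n, hn⟩ => h n i hn, fun h n i hn => h i ⟨n, hn⟩⟩
  have hnonempty : (∃ n, (trace G sP π n).2 ≠ ∅) ↔ (deviators G sP π).Nonempty := by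
    rw [Set.nonempty_iff_ne_empty, Ne, ← hempty, not_forall]
  simp only [ChallengerWins, hempty, hnonempty, exists_mem_trace_snd_iff]

end DeviatorGame

section Simulation

variable (sP : List (PV ι V × V) → PV ι V → V)
  (sC : List (PV ι V × V) → PV ι V → V → PV ι V)

lemma devAux_fst_length (init : PV ι V) (n : ℕ) : (devAux G sP sC init n).1.length = n := by
  induction n with
  | zero => rfl
  | succ n ih => simp [devAux, ih]

lemma devPos_succ (init : PV ι V) (n : ℕ) :
    devPos G sP sC init (n + 1) =
      sC (devAux G sP sC init n).1 (devPos G sP sC init n)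
        (sP (devAux G sP sC init n).1 (devPos G sP sC init n)) := rfl

lemma devAux_eq_trace (hsC : CStratValid G sC) {v0 : V} {π : ℕ → V}
    (hπ : ∀ k, (devPos G sP sC (v0, ∅) k).1 = π k) (n : ℕ) :
    devAux G sP sC (v0, ∅) n = ((trace G sP π n).1, (π n, (trace G sP π n).2)) := by
  induction n with
  | zero => rw [← hπ 0]; rfl
  | succ n ih =>
    have hstep : devAux G sP sC (v0, ∅) (n + 1) =
        ((trace G sP π n).1 ++ [((π n, (trace G sP π n).2), proposal G sP π n)],
          sC (trace G sP π n).1 (π n, (trace G sP π n).2) (proposal G sP π n)) := by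
      change ((devAux G sP sC (v0, ∅) n).1 ++ _, _) = _
      rw [ih]
      rfl
    have hnext : π (n + 1) =
        (sC (trace G sP π n).1 (π n, (trace G sP π n).2) (proposal G sP π n)).1 := by
      rw [← hπ]
      exact congrArg (fun a => a.2.1) hstep
    rw [hstep, trace_succ]
    rcases hsC (trace G sP π n).1 (π n, (trace G sP π n).2) (proposal G sP π n) with
      hacc | ⟨w, hw, -, hdev⟩
    · rw [hacc] at hnext ⊢
      simp [hnext]
    · rw [hdev] at hnext ⊢
      simp only at hnext
      simp [hnext, hw]

lemma devPos_eq_trace (hsC : CStratValid G sC) {v0 : V} {π : ℕ → V}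
    (hπ : ∀ k, (devPos G sP sC (v0, ∅) k).1 = π k) (n : ℕ) :
    devPos G sP sC (v0, ∅) n = (π n, (trace G sP π n).2) :=
  congrArg Prod.snd (devAux_eq_trace G sP sC hsC hπ n)

lemma isPlay_devPos (hsP : PStratValid G sP) (hsC : CStratValid G sC) (init : PV ι V) :
    IsPlay G init.1 (fun k => (devPos G sP sC init k).1) := by
  refine ⟨rfl, fun n => ?_⟩
  dsimp only
  rw [devPos_succ]
  rcases hsC (devAux G sP sC init n).1 (devPos G sP sC init n)
      (sP (devAux G sP sC init n).1 (devPos G sP sC init n)) with h | ⟨w, -, hw, h⟩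
  · rw [h]; exact hsP _ _
  · rw [h]; exact hw

/-- The edge test only serves to make the strategy valid off the play `π`. -/
def followChallenger (π : ℕ → V) : List (PV ι V × V) → PV ι V → V → PV ι V :=
  fun h x p =>
    if G.E x.1 (π (h.length + 1)) ∧ π (h.length + 1) ≠ p
    then (π (h.length + 1), x.2 ∪ {G.owner x.1}) else (p, x.2)

lemma followChallenger_valid (π : ℕ → V) : CStratValid G (followChallenger G π) := by
  intro h x p
  unfold followChallenger
  split_ifs with hc
  · exact Or.inr ⟨_, hc.2, hc.1, rfl⟩
  · exact Or.inl rfl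

lemma followChallenger_fst {π : ℕ → V} (h : List (PV ι V × V)) (x : PV ι V) (p : V)
    (hx : x.1 = π h.length) (hE : G.E (π h.length) (π (h.length + 1))) :
    (followChallenger G π h x p).1 = π (h.length + 1) := by
  unfold followChallenger
  split_ifs with hc
  · rfl
  · by_contra hne
    exact hc ⟨hx ▸ hE, Ne.symm hne⟩

lemma devPos_followChallenger {v0 : V} {π : ℕ → V} (hπ : IsPlay G v0 π) (n : ℕ) :
    (devPos G sP (followChallenger G π) (v0, ∅) n).1 = π n := by
  induction n with
  | zero => exact hπ.1.symm
  | succ n ih =>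
    rw [devPos_succ, followChallenger_fst, devAux_fst_length]
    · rw [devAux_fst_length, ih]
    · rw [devAux_fst_length]
      exact hπ.2 n

/-- A play of `G` stands for the Challenger strategy that realises it. -/
theorem proverWins_iff (μ : ι → (ℕ → V) → ℝ) (xbar : ι → ℝ) (Corr : Set (ℕ → V)) (v0 : V) :
    ProverWins G μ xbar Corr (v0, ∅) ↔
      ∃ sP, PStratValid G sP ∧ ∀ π, IsPlay G v0 π →
        ¬ ChallengerWins μ xbar Corr (fun n => (π n, (trace G sP π n).2)) := by
  refine exists_congr fun sP => and_congr_right fun hsP =>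
    ⟨fun hwin π hπ => ?_, fun hwin sC hsC => ?_⟩
  · have hpos :
        devPos G sP (followChallenger G π) (v0, ∅) = fun n => (π n, (trace G sP π n).2) :=
      funext (devPos_eq_trace G sP _ (followChallenger_valid G π)
        (devPos_followChallenger G sP hπ))
    simpa only [hpos] using hwin _ (followChallenger_valid G π)
  · rw [funext (devPos_eq_trace G sP sC hsC fun _ => rfl)]
    exact hwin _ (isPlay_devPos G sP sC hsP hsC (v0, ∅))

end Simulation

section Equilibria

lemma combine_empty (σ σ' : ι → Strat G) : combine ∅ σ σ' = σ :=
  funext fun i => if_neg (Set.notMem_empty i)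

def proverOfProfile (σ : ι → Strat G) : List (PV ι V × V) → PV ι V → V :=
  fun h x => (σ (G.owner x.1)).1 (h.map fun q => q.1.1) x.1

lemma proverOfProfile_valid (σ : ι → Strat G) : PStratValid G (proverOfProfile G σ) :=
  fun _ x => (σ _).2 _ x.1

lemma proposal_proverOfProfile (σ : ι → Strat G) (π : ℕ → V) (n : ℕ) :
    proposal G (proverOfProfile G σ) π n =
      (σ (G.owner (π n))).1 ((List.range n).map π) (π n) := by
  rw [proposal, proverOfProfile, map_trace_fst]

lemma not_challengerWins_proverOfProfile (μ : ι → (ℕ → V) → ℝ) (xbar : ι → ℝ)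
    (Corr : Set (ℕ → V)) {σ : ι → Strat G} {v0 : V} (hσ : IsSSE G μ v0 σ)
    (hx : ∀ i, μ i (play G σ v0) = xbar i) (hCorr : play G σ v0 ∈ Corr) {π : ℕ → V}
    (hπ : IsPlay G v0 π) :
    ¬ ChallengerWins μ xbar Corr (fun n => (π n, (trace G (proverOfProfile G σ) π n).2)) := by
  set C := deviators G (proverOfProfile G σ) π
  obtain ⟨σ', hσ'⟩ := exists_play_combine_eq σ C hπ fun n hn => by
    by_contra hne
    exact hn ⟨n, by rwa [proposal_proverOfProfile], rfl⟩
  rw [challengerWins_trace_iff]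
  rintro (⟨hC, hbad⟩ | ⟨-, hge, j, hjC, hjlt⟩)
  · rw [show C = ∅ from hC, combine_empty] at hσ'
    subst hσ'
    rcases hbad with ⟨i, hi⟩ | hnot
    exacts [hi (hx i), hnot hCorr]
  · refine hσ ⟨C, σ', fun i hi => ?_, j, hjC, ?_⟩
    · rw [hσ', hx i]; exact hge i hi
    · rw [hσ', hx j]; exact hjlt

def profileOfProver (sP : List (PV ι V × V) → PV ι V → V) (hsP : PStratValid G sP) :
    ι → Strat G := fun _ =>
  ⟨fun h v => proposal G sP (extendHist h v) h.length,
   fun h v => by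
    simpa only [extendHist_length] using proposal_valid G sP hsP (extendHist h v) h.length⟩

variable (sP : List (PV ι V × V) → PV ι V → V) (hsP : PStratValid G sP)

lemma profileOfProver_apply (i : ι) (π : ℕ → V) (n : ℕ) :
    (profileOfProver G sP hsP i).1 ((List.range n).map π) (π n) = proposal G sP π n := by
  simp only [profileOfProver, List.length_map, List.length_range]
  exact proposal_congr G sP fun k hk => extendHist_range_map π hk

lemma play_profileOfProver_eq_iff {v0 : V} {π : ℕ → V} :
    play G (profileOfProver G sP hsP) v0 = π ↔
      π 0 = v0 ∧ ∀ n, π (n + 1) = proposal G sP π n := by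
  simp only [play_eq_iff, profileOfProver_apply]

variable {μ : ι → (ℕ → V) → ℝ} {xbar : ι → ℝ} {Corr : Set (ℕ → V)} {v0 : V}
  (hwin : ∀ π, IsPlay G v0 π →
    ¬ ChallengerWins μ xbar Corr (fun n => (π n, (trace G sP π n).2)))
include hwin

lemma outcome_profileOfProver :
    (∀ i, μ i (play G (profileOfProver G sP hsP) v0) = xbar i) ∧
      play G (profileOfProver G sP hsP) v0 ∈ Corr := by
  set π := play G (profileOfProver G sP hsP) v0
  have hD : deviators G sP π = ∅ :=
    (deviators_eq_empty_iff G sP π).2 ((play_profileOfProver_eq_iff G sP hsP).1 rfl).2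
  have h := hwin π (isPlay_play _ v0)
  rw [challengerWins_trace_iff, hD] at h
  by_contra hbad
  refine h (Or.inl ⟨rfl, ?_⟩)
  rcases not_and_or.1 hbad with hμ | hCorr
  exacts [Or.inl (not_forall.1 hμ), Or.inr hCorr]

lemma isSSE_profileOfProver (hx : ∀ i, μ i (play G (profileOfProver G sP hsP) v0) = xbar i) :
    IsSSE G μ v0 (profileOfProver G sP hsP) := by
  rintro ⟨C, σ'', hge, j, hjC, hjlt⟩
  obtain ⟨π, hπ⟩ : ∃ π, play G (combine C (profileOfProver G sP hsP) σ'') v0 = π := ⟨_, rfl⟩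
  have hsub : deviators G sP π ⊆ C := by
    rintro _ ⟨k, hk, rfl⟩
    by_contra hkC
    apply hk
    rw [(play_eq_iff.1 hπ).2 k]
    simp only [combine, hkC, if_false, profileOfProver_apply]
  have h := hwin π (hπ ▸ isPlay_play _ v0)
  rw [challengerWins_trace_iff] at h
  by_cases hD : deviators G sP π = ∅
  · have hplay : play G (profileOfProver G sP hsP) v0 = π :=
      (play_profileOfProver_eq_iff G sP hsP).2
        ⟨(play_eq_iff.1 hπ).1, (deviators_eq_empty_iff G sP π).1 hD⟩
    rw [hplay, ← hπ] at hjlt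
    exact lt_irrefl _ hjlt
  · exact h (Or.inr ⟨Set.nonempty_iff_ne_empty.2 hD, fun i hi => hx i ▸ hπ ▸ hge i (hsub hi),
      j, fun hj => hjC (hsub hj), hx j ▸ hπ ▸ hjlt⟩)

end Equilibria

end

theorem stmt6_general (ι V : Type*) (G : Arena ι V) (v0 : V)
    (μ : ι → (ℕ → V) → ℝ)
    (xbar : ι → ℝ) (Corr : Set (ℕ → V)) :
    ProverWins G μ xbar Corr (v0, (∅ : Set ι)) ↔
      ∃ σ : ι → Strat G, IsSSE G μ v0 σ ∧
        (∀ i, μ i (play G σ v0) = xbar i) ∧ play G σ v0 ∈ Corr := by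
  rw [proverWins_iff]
  constructor
  · rintro ⟨sP, hsP, hwin⟩
    obtain ⟨hx, hCorr⟩ := outcome_profileOfProver G sP hsP hwin
    exact ⟨_, isSSE_profileOfProver G sP hsP hwin hx, hx, hCorr⟩
  · rintro ⟨σ, hσ, hx, hCorr⟩
    exact ⟨proverOfProfile G σ, proverOfProfile_valid G σ,
      fun π hπ => not_challengerWins_proverOfProfile G μ xbar Corr hσ hx hCorr hπ⟩

/-- Prover wins the deviator game from `(v₀, ∅)` iff there is an SSE with payoff
vector `x̄` whose play satisfies the correctness condition. -/
theorem stmt6 (ι V : Type*) [Fintype V] (G : Arena ι V) (v0 : V)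
    (μ : ι → (ℕ → V) → ℝ) (hbool : ∀ i π, μ i π = 0 ∨ μ i π = 1)
    (xbar : ι → ℝ) (Corr : Set (ℕ → V)) :
    ProverWins G μ xbar Corr (v0, (∅ : Set ι)) ↔
      ∃ σ : ι → Strat G, IsSSE G μ v0 σ ∧
        (∀ i, μ i (play G σ v0) = xbar i) ∧ play G σ v0 ∈ Corr :=
  stmt6_general ι V G v0 μ xbar Corr

end
end Stmt6
end
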